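/- Let m ∈ ℕ, σ > 0, let h : ℝ^m → ℝ be a bounded measurable function, and let u ∈ ℝ^m, v ∈ ℝ, v_h ∈ ℝ. Let U* have law N(u, σ²I_m), let V* have law N(v, σ²), and let U* and V* be independent. Then |P(V* ≤ v_h − h(U*)) − Φ̄((v − v_h + E[h(U*)])/σ)| ≤ ‖h‖_∞² / σ², where ‖h‖_∞ = sup_{x∈ℝ^m} |h(x)|. In other words, the bootstrap probability of the region H = {(x,w) : w ≤ v_h − h(x)} under N((u,v), σ²I_{m+1}) equals Φ̄((v − v_h + E_{σ²}h(u))/σ) up to an error of second order in ‖h‖_∞. -/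

import Mathlib

/-!
Integrating out `V*` first turns the probability into `E Φ̄((v - v_h + h(U*))/σ)`. Since
`Φ̄' = -φ` and `|φ'(t)| = |t| φ(t) ≤ φ(1) < 1/4`, expanding `Φ̄` to first order around the mean
argument `(v - v_h + E h(U*))/σ` costs at most a quarter of the squared deviation. The linear
term has mean zero, and `|h - E h| ≤ 2‖h‖_∞` bounds the squared deviation by `4‖h‖_∞² / σ²`.
-/

open MeasureTheory ProbabilityTheory Set
open scoped NNReal

/-- The standard normal density. -/
noncomputable def stdphi (t : ℝ) : ℝ :=
  (Real.sqrt (2 * Real.pi))⁻¹ * Real.exp (-t ^ 2 / 2)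

/-- The standard normal upper-tail probability Φ̄. -/
noncomputable def Phibar (x : ℝ) : ℝ := ∫ t in Set.Ioi x, stdphi t

/-- The Gaussian measure `N(μ, σ² I_m)` on `ℝ^m` as a product of one-dimensional
Gaussian measures. -/
noncomputable def gaussianPi {m : ℕ} (μ : Fin m → ℝ) (v : ℝ≥0) :
    Measure (Fin m → ℝ) :=
  Measure.pi fun i => gaussianReal (μ i) v

theorem abs_sub_sub_mul_le_of_lipschitzWith_deriv {f f' : ℝ → ℝ} {K : ℝ≥0}
    (hf : ∀ t, HasDerivAt f (f' t) t) (hf' : LipschitzWith K f') (a b : ℝ) :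
    |f b - f a - f' a * (b - a)| ≤ K * (b - a) ^ 2 := by
  have hderiv : ∀ t ∈ uIcc a b,
      HasDerivWithinAt (fun s => f s - f' a * s) (f' t - f' a) (uIcc a b) t := fun t _ =>
    ((hf t).sub ((hasDerivAt_id t).const_mul (f' a))).hasDerivWithinAt.congr_deriv (by simp)
  have hbound : ∀ t ∈ uIcc a b, ‖f' t - f' a‖ ≤ K * |b - a| := fun t ht =>
    calc ‖f' t - f' a‖ = dist (f' t) (f' a) := rfl
      _ ≤ K * dist t a := hf'.dist_le_mul t a
      _ ≤ K * |b - a| := by gcongr; exact abs_sub_left_of_mem_uIcc ht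
  have hmvt := Convex.norm_image_sub_le_of_norm_hasDerivWithin_le hderiv hbound (convex_uIcc a b)
    left_mem_uIcc right_mem_uIcc
  rw [Real.norm_eq_abs, Real.norm_eq_abs] at hmvt
  calc |f b - f a - f' a * (b - a)| = |f b - f' a * b - (f a - f' a * a)| := by ring_nf
    _ ≤ K * |b - a| * |b - a| := hmvt
    _ = K * (b - a) ^ 2 := by rw [mul_assoc, abs_mul_abs_self, sq]

theorem abs_integral_comp_sub_comp_integral_le {α : Type*} [MeasurableSpace α]
    {μ : Measure α} [IsProbabilityMeasure μ] {f f' : ℝ → ℝ} {K : ℝ≥0}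
    (hf : ∀ t, HasDerivAt f (f' t) t) (hf' : LipschitzWith K f') {g : α → ℝ}
    (hg : AEMeasurable g μ) {D : ℝ} (hD : ∀ x, |g x - ∫ y, g y ∂μ| ≤ D) :
    |∫ x, f (g x) ∂μ - f (∫ x, g x ∂μ)| ≤ K * D ^ 2 := by
  set E := ∫ x, g x ∂μ
  set R := fun x => f (g x) - f E - f' E * (g x - E)
  have hR : ∀ x, ‖R x‖ ≤ K * D ^ 2 := fun x =>
    (abs_sub_sub_mul_le_of_lipschitzWith_deriv hf hf' E (g x)).trans <|
      mul_le_mul_of_nonneg_left (sq_le_sq' (abs_le.1 (hD x)).1 (abs_le.1 (hD x)).2) K.coe_nonneg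
  have hf_meas : Measurable f :=
    (Differentiable.continuous fun t => (hf t).differentiableAt).measurable
  have hg_int : Integrable g μ := .of_bound hg.aestronglyMeasurable (|E| + D) <|
    ae_of_all _ fun x => by
      rw [Real.norm_eq_abs]; linarith [abs_sub_abs_le_abs_sub (g x) E, hD x]
  have hR_int : Integrable R μ :=
    .of_bound (((hf_meas.comp_aemeasurable hg).sub aemeasurable_const).sub
      ((hg.sub_const E).const_mul (f' E))).aestronglyMeasurable _ (ae_of_all _ hR)
  have hlin_int : Integrable (fun x => f' E * (g x - E)) μ :=
    (hg_int.sub (integrable_const E)).const_mul _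
  have hlin : ∫ x, (f E + f' E * (g x - E)) ∂μ = f E := by
    rw [integral_add (integrable_const _) hlin_int, integral_const_mul,
      integral_sub hg_int (integrable_const E)]
    simp [E]
  have hsplit : ∫ x, f (g x) ∂μ = f E + ∫ x, R x ∂μ := by
    rw [← hlin, ← integral_add (f := fun x => f E + f' E * (g x - E))
      ((integrable_const _).add hlin_int) hR_int]
    exact integral_congr_ae (ae_of_all _ fun x => by simp only [R]; ring)
  rw [hsplit, add_sub_cancel_left]
  simpa using norm_integral_le_of_norm_le_const (μ := μ) (ae_of_all _ hR)

theorem gaussianPDFReal_zero_one : gaussianPDFReal 0 1 = stdphi := by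
  ext t
  simp [gaussianPDFReal, stdphi]

theorem stdphi_nonneg (t : ℝ) : 0 ≤ stdphi t :=
  gaussianPDFReal_zero_one ▸ gaussianPDFReal_nonneg 0 1 t

theorem integrable_stdphi : Integrable stdphi :=
  gaussianPDFReal_zero_one ▸ integrable_gaussianPDFReal 0 1

theorem continuous_stdphi : Continuous stdphi := by
  unfold stdphi; fun_prop

theorem hasDerivAt_stdphi (t : ℝ) : HasDerivAt stdphi (-t * stdphi t) t := by
  have hexponent : HasDerivAt (fun s : ℝ => -s ^ 2 / 2) (-t) t :=
    ((hasDerivAt_pow 2 t).neg.div_const 2).congr_deriv (by ring)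
  exact (hexponent.exp.const_mul _).congr_deriv (by rw [stdphi]; ring)

theorem abs_mul_stdphi_le (t : ℝ) : |t * stdphi t| ≤ 1 / 4 := by
  have hlin : |t| ≤ Real.exp ((t ^ 2 - 1) / 2) := by
    nlinarith [Real.add_one_le_exp ((t ^ 2 - 1) / 2), sq_nonneg (|t| - 1), sq_abs t]
  have hpeak : |t| * Real.exp (-t ^ 2 / 2) ≤ Real.exp (-(1 / 2)) :=
    calc |t| * Real.exp (-t ^ 2 / 2)
        ≤ Real.exp ((t ^ 2 - 1) / 2) * Real.exp (-t ^ 2 / 2) := by gcongr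
      _ = Real.exp (-(1 / 2)) := by rw [← Real.exp_add]; ring_nf
  have hexp : Real.exp (-(1 / 2)) ≤ 8 / 13 := by
    rw [Real.exp_neg, inv_le_comm₀ (Real.exp_pos _) (by norm_num)]
    linarith [Real.quadratic_le_exp_of_nonneg (x := 1 / 2) (by norm_num)]
  have hsqrt : 5 / 2 ≤ Real.sqrt (2 * Real.pi) :=
    Real.le_sqrt_of_sq_le (by nlinarith [Real.pi_gt_d2])
  calc |t * stdphi t| = |t| * Real.exp (-t ^ 2 / 2) / Real.sqrt (2 * Real.pi) := by
        rw [stdphi, abs_mul, abs_mul, abs_of_pos (Real.exp_pos _),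
          abs_of_pos (inv_pos.2 (by linarith : (0 : ℝ) < Real.sqrt (2 * Real.pi)))]
        ring
    _ ≤ (8 / 13) / (5 / 2) := by gcongr; linarith
    _ ≤ 1 / 4 := by norm_num

theorem lipschitzWith_stdphi : LipschitzWith (1 / 4) stdphi :=
  lipschitzWith_of_nnnorm_deriv_le (fun t => (hasDerivAt_stdphi t).differentiableAt) fun t => by
    rw [← NNReal.coe_le_coe, coe_nnnorm, (hasDerivAt_stdphi t).deriv, Real.norm_eq_abs,
      neg_mul, abs_neg]
    simpa using abs_mul_stdphi_le t

theorem Phibar_nonneg (x : ℝ) : 0 ≤ Phibar x :=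
  setIntegral_nonneg measurableSet_Ioi fun t _ => stdphi_nonneg t

theorem hasDerivAt_Phibar (x : ℝ) : HasDerivAt Phibar (-stdphi x) x := by
  have hPhibar : Phibar = fun y => Phibar 0 - ∫ t in (0 : ℝ)..y, stdphi t := by
    ext y
    rw [← intervalIntegral.integral_Ioi_sub_Ioi' integrable_stdphi.integrableOn
      integrable_stdphi.integrableOn]
    simp only [Phibar]
    ring
  rw [hPhibar]
  exact ((continuous_stdphi.integral_hasStrictDerivAt 0 x).hasDerivAt).const_sub _

theorem gaussianReal_zero_one_Ioi (x : ℝ) :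
    gaussianReal 0 1 (Ioi x) = ENNReal.ofReal (Phibar x) := by
  rw [gaussianReal_apply_eq_integral 0 one_ne_zero, gaussianPDFReal_zero_one, Phibar]

theorem gaussianReal_Iic {σ : ℝ} (hσ : 0 < σ) (v c : ℝ) :
    gaussianReal v (σ ^ 2).toNNReal (Iic c) = ENNReal.ofReal (Phibar ((v - c) / σ)) := by
  have hmap : gaussianReal v (σ ^ 2).toNNReal = (gaussianReal 0 1).map (fun y => v - σ * y) := by
    rw [show (fun y => v - σ * y) = (v - ·) ∘ (σ * ·) from rfl,
      ← Measure.map_map (by fun_prop) (by fun_prop), gaussianReal_map_const_mul,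
      gaussianReal_map_const_sub]
    congr 1
    · ring
    · ext; simp [sq_nonneg]
  have hpre : (fun y => v - σ * y) ⁻¹' Iic c = Ici ((v - c) / σ) := by
    ext y
    simp only [mem_preimage, mem_Iic, mem_Ici, div_le_iff₀ hσ]
    constructor <;> intro <;> linarith
  have := nullSingletonClass_gaussianReal (μ := 0) one_ne_zero
  rw [hmap, Measure.map_apply (by fun_prop) measurableSet_Iic, hpre,
    ← measure_congr Ioi_ae_eq_Ici, gaussianReal_zero_one_Ioi]

theorem toReal_prod_gaussianReal_setOf_snd_le {α : Type*} [MeasurableSpace α]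
    (μ : Measure α) [SFinite μ] {σ : ℝ} (hσ : 0 < σ) (v : ℝ) {k : α → ℝ} (hk : Measurable k) :
    ((μ.prod (gaussianReal v (σ ^ 2).toNNReal)) {p | p.2 ≤ k p.1}).toReal
      = ∫ x, Phibar ((v - k x) / σ) ∂μ := by
  have hPhibar : Measurable Phibar :=
    (Differentiable.continuous fun x => (hasDerivAt_Phibar x).differentiableAt).measurable
  have hS : MeasurableSet {p : α × ℝ | p.2 ≤ k p.1} :=
    measurableSet_le measurable_snd (hk.comp measurable_fst)
  rw [Measure.prod_apply hS,
    integral_eq_lintegral_of_nonneg_ae (ae_of_all _ fun x => Phibar_nonneg _)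
      (by fun_prop : Measurable fun x => Phibar ((v - k x) / σ)).aestronglyMeasurable]
  exact congrArg ENNReal.toReal (lintegral_congr fun x => gaussianReal_Iic hσ v (k x))

theorem abs_toReal_prod_gaussianReal_sub_Phibar_le {α : Type*} [MeasurableSpace α]
    (μ : Measure α) [IsProbabilityMeasure μ] {σ : ℝ} (hσ : 0 < σ) {h : α → ℝ}
    (hmeas : Measurable h) (hbdd : BddAbove (range fun x => |h x|)) (v vh : ℝ) :
    |((μ.prod (gaussianReal v (σ ^ 2).toNNReal)) {p | p.2 ≤ vh - h p.1}).toReal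
      - Phibar ((v - vh + ∫ x, h x ∂μ) / σ)| ≤ (⨆ x, |h x|) ^ 2 / σ ^ 2 := by
  set M := ⨆ x, |h x|
  have hM : ∀ x, |h x| ≤ M := le_ciSup hbdd
  have hM_ae : ∀ᵐ x ∂μ, ‖h x‖ ≤ M := ae_of_all _ hM
  have hE : |∫ x, h x ∂μ| ≤ M := by simpa using norm_integral_le_of_norm_le_const hM_ae
  set g := fun x => (v - vh + h x) / σ
  have hg_integral : ∫ x, g x ∂μ = (v - vh + ∫ x, h x ∂μ) / σ := by
    rw [integral_div, integral_add (integrable_const _)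
      (.of_bound hmeas.aestronglyMeasurable M hM_ae), integral_const]
    simp
  have hD : ∀ x, |g x - ∫ y, g y ∂μ| ≤ 2 * M / σ := fun x => by
    rw [hg_integral, ← sub_div, abs_div, abs_of_pos hσ]
    gcongr
    calc |v - vh + h x - (v - vh + ∫ y, h y ∂μ)| = |h x - ∫ y, h y ∂μ| := by ring_nf
      _ ≤ |h x| + |∫ y, h y ∂μ| := abs_sub _ _
      _ ≤ 2 * M := by linarith [hM x]
  have hprob := toReal_prod_gaussianReal_setOf_snd_le μ hσ v (hmeas.const_sub vh)
  simp_rw [sub_sub_eq_add_sub, add_sub_right_comm v] at hprob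
  rw [hprob, ← hg_integral]
  calc |∫ x, Phibar (g x) ∂μ - Phibar (∫ x, g x ∂μ)| ≤ (1 / 4 : ℝ≥0) * (2 * M / σ) ^ 2 :=
        abs_integral_comp_sub_comp_integral_le hasDerivAt_Phibar lipschitzWith_stdphi.neg
          ((hmeas.const_add _).div_const σ).aemeasurable hD
    _ = M ^ 2 / σ ^ 2 := by push_cast; ring

instance isProbabilityMeasure_gaussianPi {m : ℕ} (μ : Fin m → ℝ) (v : ℝ≥0) :
    IsProbabilityMeasure (gaussianPi μ v) := by
  unfold gaussianPi; infer_instance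

/-- Bootstrap probability of a nearly flat region: for bounded measurable `h`,
with `U* ~ N(u, σ²I_m)` and `V* ~ N(v, σ²)` independent, the probability
`P(V* ≤ v_h − h(U*))` equals `Φ̄((v − v_h + E h(U*))/σ)` up to an error of
second order in `‖h‖_∞`. -/
theorem stmt_2 (m : ℕ) (σ : ℝ) (hσ : 0 < σ) (h : (Fin m → ℝ) → ℝ)
    (hmeas : Measurable h) (hbdd : BddAbove (Set.range fun x => |h x|))
    (u : Fin m → ℝ) (v vh : ℝ) :
    |(((gaussianPi u (σ ^ 2).toNNReal).prod (gaussianReal v (σ ^ 2).toNNReal))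
        {p : (Fin m → ℝ) × ℝ | p.2 ≤ vh - h p.1}).toReal
      - Phibar ((v - vh + ∫ x, h x ∂(gaussianPi u (σ ^ 2).toNNReal)) / σ)|
      ≤ (⨆ x, |h x|) ^ 2 / σ ^ 2 :=
  abs_toReal_prod_gaussianReal_sub_Phibar_le _ hσ hmeas hbdd v vh
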